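/- arXiv:math-ph/0304015 — 9 statements merged into one kernel-verified Lean document; each statement's English description precedes it below -/
import Mathlib

section
/- Let V be a finite-dimensional complex vector space with a nondegenerate alternating bilinear form ω, let W ⊆ V be a coisotropic subspace, and let W'' be a subspace with W° ⊆ W'' ⊆ W. Then (W'')° ⊇ W°, and for every subspace L ⊆ V one has ((L ∩ W) + W°) ∩ W'' + (W'')° = (L ∩ W'') + (W'')°. (This expresses that the composition of the symplectic reduction by W followed by the symplectic reduction by W''/W° inside W/W° equals the symplectic reduction by W''.) -/
/-- The `ω`-orthogonal of a subspace `U`: all vectors `v` with `ω v u = 0` for every `u ∈ U`. -/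
def sympOrth {V : Type*} [AddCommGroup V] [Module ℂ V]
    (ω : V →ₗ[ℂ] V →ₗ[ℂ] ℂ) (U : Submodule ℂ V) : Submodule ℂ V where
  carrier := {v | ∀ u ∈ U, ω v u = 0}
  add_mem' := by
    intro a b ha hb u hu
    simp [map_add, LinearMap.add_apply, ha u hu, hb u hu]
  zero_mem' := by
    intro u hu
    simp
  smul_mem' := by
    intro c a ha u hu
    simp [map_smul, LinearMap.smul_apply, ha u hu]

/-- If `W` is coisotropic and `W° ⊆ W'' ⊆ W`, then `(W'')° ⊇ W°`, and for every subspace `L`,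
`(((L ∩ W) + W°) ∩ W'') + (W'')° = (L ∩ W'') + (W'')°`: composing the symplectic reduction by
`W` with the symplectic reduction by `W''/W°` inside `W/W°` equals the symplectic reduction by
`W''`. -/
theorem statement_2 {V : Type*} [AddCommGroup V] [Module ℂ V] [FiniteDimensional ℂ V]
    (ω : V →ₗ[ℂ] V →ₗ[ℂ] ℂ)
    (halt : ∀ x, ω x x = 0)
    (hnondeg : ∀ x, (∀ y, ω x y = 0) → x = 0)
    (W W'' : Submodule ℂ V)
    (hW : sympOrth ω W ≤ W)
    (h1 : sympOrth ω W ≤ W'') (h2 : W'' ≤ W) :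
    sympOrth ω W ≤ sympOrth ω W'' ∧
      ∀ L : Submodule ℂ V,
        (((L ⊓ W) ⊔ sympOrth ω W) ⊓ W'') ⊔ sympOrth ω W''
          = (L ⊓ W'') ⊔ sympOrth ω W'' := by
  have horth : sympOrth ω W ≤ sympOrth ω W'' := fun v hv u hu => hv u (h2 hu)
  refine ⟨horth, fun L => le_antisymm ?_ ?_⟩
  · intro x hx
    rcases Submodule.mem_sup.1 hx with ⟨y, hy, z, hz, rfl⟩
    rcases Submodule.mem_sup.1 hy.1 with ⟨a, ha, b, hb, hab⟩
    have haW'' : a ∈ W'' := by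
      have : a = y - b := by rw [← hab]; abel
      rw [this]
      exact Submodule.sub_mem _ hy.2 (h1 hb)
    have : y + z = a + (b + z) := by rw [← hab]; abel
    rw [this]
    exact Submodule.add_mem_sup ⟨ha.1, haW''⟩ (Submodule.add_mem _ (horth hb) hz)
  · apply sup_le_sup_right
    intro x hx
    exact ⟨Submodule.mem_sup_left ⟨hx.1, h2 hx.2⟩, hx.2⟩
end

section
/- Let F be a finite type, ∂F ⊆ F, and let Q be a complex symmetric matrix indexed by F whose block D = Q restricted to (F∖∂F)×(F∖∂F) is invertible. In V_F = (F → ℂ) × (F → ℂ), let L_Q = {(f, Q·f) : f : F → ℂ}, let W = {(g, ξ) ∈ V_F : ξ(x) = 0 for all x ∉ ∂F}, and let p : W → (∂F → ℂ) × (∂F → ℂ) be the map p(g, ξ) = (g|_{∂F}, ξ|_{∂F}). Then p(L_Q ∩ W) = L_{Q_{∂F}} = {(h, Q_{∂F}·h) : h : ∂F → ℂ}, where Q_{∂F} = A − B D⁻¹ Bᵀ. (This is the statement that the trace map coincides with the symplectic reduction by the coisotropic subspace W, whose ω-orthogonal W° = {(g,0) : g|_{∂F} = 0} is exactly the kernel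 of p.) -/
set_option maxHeartbeats 1000000


open Matrix


/-- In `V_F = (F → ℂ) × (F → ℂ)` let `L_Q = {(f, Q·f)}`, `W = {(g,ξ) : ξ|_{F∖∂F} = 0}` and
`p : W → (∂F → ℂ) × (∂F → ℂ)`, `p(g,ξ) = (g|_{∂F}, ξ|_{∂F})`. If the block
`D = Q|_{(F∖∂F)×(F∖∂F)}` is invertible, then `p(L_Q ∩ W) = L_{Q_{∂F}}` where
`Q_{∂F} = A − B D⁻¹ Bᵀ` is the Schur complement: the trace map coincides with the symplectic
reduction by the coisotropic subspace `W`. -/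
theorem statement_5 {F : Type*} [Fintype F] [DecidableEq F]
    (s : Set F) [DecidablePred (· ∈ s)]
    (Q : Matrix F F ℂ) (hQsym : Q.IsSymm)
    (A : Matrix {x // x ∈ s} {x // x ∈ s} ℂ)
    (hA : A = Q.submatrix Subtype.val Subtype.val)
    (B : Matrix {x // x ∈ s} {x // x ∉ s} ℂ)
    (hB : B = Q.submatrix Subtype.val Subtype.val)
    (D : Matrix {x // x ∉ s} {x // x ∉ s} ℂ)
    (hD : D = Q.submatrix Subtype.val Subtype.val)
    (hDinv : IsUnit D.det) :
    (fun v : (F → ℂ) × (F → ℂ) =>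
        ((fun x : {x // x ∈ s} => v.1 x.val, fun x : {x // x ∈ s} => v.2 x.val) :
          ({x // x ∈ s} → ℂ) × ({x // x ∈ s} → ℂ))) ''
        ({v : (F → ℂ) × (F → ℂ) | ∃ f : F → ℂ, v = (f, Q *ᵥ f)} ∩
          {v : (F → ℂ) × (F → ℂ) | ∀ x : F, x ∉ s → v.2 x = 0})
      = {w : ({x // x ∈ s} → ℂ) × ({x // x ∈ s} → ℂ) |
          ∃ h : {x // x ∈ s} → ℂ, w = (h, (A - B * D⁻¹ * Bᵀ) *ᵥ h)} := by
  have hsym : ∀ (i j : F), Q i j = Q j i := fun i j => hQsym.apply j i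
  -- the transpose of B is the lower-left block
  have hBT : Bᵀ = Q.submatrix (Subtype.val : {x // x ∉ s} → F)
      (Subtype.val : {x // x ∈ s} → F) := by
    subst hB
    ext i j
    simp [hsym j.val i.val]
  set C : Matrix {x // x ∉ s} {x // x ∈ s} ℂ :=
    Q.submatrix Subtype.val Subtype.val with hC
  -- splitting the action of Q
  have keyS : ∀ (f : F → ℂ) (i : {x // x ∈ s}),
      (Q *ᵥ f) i.val = (A *ᵥ fun y : {x // x ∈ s} => f y.val) i
        + (B *ᵥ fun y : {x // x ∉ s} => f y.val) i := by
    intro f i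
    rw [hA, hB]
    simp only [mulVec, dotProduct, submatrix_apply]
    exact (Fintype.sum_subtype_add_sum_subtype (· ∈ s) (fun y => Q i.val y * f y)).symm
  have keyC : ∀ (f : F → ℂ) (i : {x // x ∉ s}),
      (Q *ᵥ f) i.val = (C *ᵥ fun y : {x // x ∈ s} => f y.val) i
        + (D *ᵥ fun y : {x // x ∉ s} => f y.val) i := by
    intro f i
    rw [hC, hD]
    simp only [mulVec, dotProduct, submatrix_apply]
    exact (Fintype.sum_subtype_add_sum_subtype (· ∈ s) (fun y => Q i.val y * f y)).symm
  have hDD : D * D⁻¹ = 1 := Matrix.mul_nonsing_inv D hDinv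
  have hDD' : D⁻¹ * D = 1 := Matrix.nonsing_inv_mul D hDinv
  ext w
  simp only [Set.mem_image, Set.mem_inter_iff, Set.mem_setOf_eq]
  constructor
  · rintro ⟨v, ⟨⟨f, rfl⟩, hker⟩, rfl⟩
    simp only at hker ⊢
    refine ⟨fun x => f x.val, ?_⟩
    have hg : (fun y : {x // x ∉ s} => f y.val)
        = -(D⁻¹ *ᵥ (C *ᵥ fun y : {x // x ∈ s} => f y.val)) := by
      have h0 : D *ᵥ (fun y : {x // x ∉ s} => f y.val)
          = -(C *ᵥ fun y : {x // x ∈ s} => f y.val) := by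
        funext i
        have := hker i.val i.prop
        rw [keyC f i] at this
        exact eq_neg_of_add_eq_zero_right this
      calc (fun y : {x // x ∉ s} => f y.val)
          = D⁻¹ *ᵥ (D *ᵥ fun y : {x // x ∉ s} => f y.val) := by
            rw [mulVec_mulVec, hDD', one_mulVec]
        _ = -(D⁻¹ *ᵥ (C *ᵥ fun y : {x // x ∈ s} => f y.val)) := by
            rw [h0, mulVec_neg]
    ext i
    · rfl
    · show (Q *ᵥ f) i.val = ((A - B * D⁻¹ * Bᵀ) *ᵥ fun x : {x // x ∈ s} => f x.val) i
      rw [keyS f i, hg]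
      simp [hBT, ← hC, mulVec_neg, mulVec_mulVec, sub_mulVec,
        Matrix.mul_assoc, sub_eq_add_neg, add_mulVec, neg_mulVec]
  · rintro ⟨h, rfl⟩
    refine ⟨(fun x => if hx : x ∈ s then h ⟨x, hx⟩
        else (-(D⁻¹ *ᵥ (C *ᵥ h))) ⟨x, hx⟩,
        Q *ᵥ (fun x => if hx : x ∈ s then h ⟨x, hx⟩
        else (-(D⁻¹ *ᵥ (C *ᵥ h))) ⟨x, hx⟩)), ⟨⟨_, rfl⟩, ?_⟩, ?_⟩
    · intro x hx
      show (Q *ᵥ _) x = 0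
      have : x = (⟨x, hx⟩ : {x // x ∉ s}).val := rfl
      rw [this, keyC]
      have e1 : (fun y : {x // x ∈ s} =>
          (fun x => if hx : x ∈ s then h ⟨x, hx⟩
            else (-(D⁻¹ *ᵥ (C *ᵥ h))) ⟨x, hx⟩) y.val) = h := by
        funext y; simp [y.prop]
      have e2 : (fun y : {x // x ∉ s} =>
          (fun x => if hx : x ∈ s then h ⟨x, hx⟩
            else (-(D⁻¹ *ᵥ (C *ᵥ h))) ⟨x, hx⟩) y.val) = -(D⁻¹ *ᵥ (C *ᵥ h)) := by
        funext y; simp [y.prop]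
      rw [e1, e2, mulVec_neg, mulVec_mulVec, hDD, one_mulVec]
      simp
    · have e1 : (fun y : {x // x ∈ s} =>
          (fun x => if hx : x ∈ s then h ⟨x, hx⟩
            else (-(D⁻¹ *ᵥ (C *ᵥ h))) ⟨x, hx⟩) y.val) = h := by
        funext y; simp [y.prop]
      have e2 : (fun y : {x // x ∉ s} =>
          (fun x => if hx : x ∈ s then h ⟨x, hx⟩
            else (-(D⁻¹ *ᵥ (C *ᵥ h))) ⟨x, hx⟩) y.val) = -(D⁻¹ *ᵥ (C *ᵥ h)) := by
        funext y; simp [y.prop]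
      ext i
      · show _ = h i
        simp [i.prop]
      · show (Q *ᵥ _) i.val = _
        rw [keyS, e1, e2]
        simp [hBT, ← hC, mulVec_neg, mulVec_mulVec, sub_mulVec,
          Matrix.mul_assoc, sub_eq_add_neg, add_mulVec, neg_mulVec]
end

section
/- Let π : F → F' be a surjection of finite types, let S be the matrix of the linear injection s : (F' → ℂ) → (F → ℂ), s(h) = h ∘ π, and let Q be a complex symmetric matrix indexed by F. In V_F = (F → ℂ) × (F → ℂ), let L_Q = {(f, Q·f) : f} and W = {(g, ξ) ∈ V_F : g ∈ range(s)}. Then the image of L_Q ∩ W under the map (s·h, ξ) ↦ (h, Sᵀ·ξ) equals L_{SᵀQS} = {(h, (SᵀQS)·h) : h : F' → ℂ}. (This is the statement that the gluing map Q ↦ Q_{F/ℛ} = SᵀQS coincides with the symplectic reduction by the coisotropic subspace W, whose ω-orthogonal is W° = {(0,ξ) : Sᵀ·ξ = 0}.) -/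
open Matrix

/-- For a surjection `π : F → F'`, `s(h) = h ∘ π` with matrix `S`, and a symmetric `Q`, the
image of `L_Q ∩ W` (where `W = {(g,ξ) : g ∈ range s}`) under `(s·h, ξ) ↦ (h, Sᵀ·ξ)` is
`L_{SᵀQS}`: the gluing map coincides with the symplectic reduction by `W`. -/
theorem statement_6 {F F' : Type*} [Fintype F] [Fintype F'] [DecidableEq F] [DecidableEq F']
    (π : F → F') (hπ : Function.Surjective π)
    (S : Matrix F F' ℂ) (hS : S = Matrix.of fun x y => if π x = y then 1 else 0)
    (Q : Matrix F F ℂ) (hQsym : Q.IsSymm) :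
    {w : (F' → ℂ) × (F' → ℂ) |
        ∃ v ∈ ({v : (F → ℂ) × (F → ℂ) | ∃ f : F → ℂ, v = (f, Q *ᵥ f)} ∩
            {v : (F → ℂ) × (F → ℂ) | ∃ h : F' → ℂ, v.1 = h ∘ π}),
          ∃ h : F' → ℂ, v.1 = h ∘ π ∧ w = (h, Sᵀ *ᵥ v.2)}
      = {w : (F' → ℂ) × (F' → ℂ) | ∃ h : F' → ℂ, w = (h, (Sᵀ * Q * S) *ᵥ h)} := by
  have hSmul : ∀ h : F' → ℂ, S *ᵥ h = h ∘ π := by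
    intro h
    funext x
    simp [hS, mulVec, dotProduct]
  ext w
  constructor
  · rintro ⟨v, ⟨⟨f, hf⟩, -⟩, h, hv1, hw⟩
    refine ⟨h, ?_⟩
    have hfh : f = S *ᵥ h := by
      rw [hSmul]
      have : v.1 = f := by rw [hf]
      rw [← this, hv1]
    rw [hw, hf, hfh]
    simp [Matrix.mulVec_mulVec, Matrix.mul_assoc]
  · rintro ⟨h, hw⟩
    refine ⟨(S *ᵥ h, Q *ᵥ (S *ᵥ h)), ⟨⟨S *ᵥ h, rfl⟩, ⟨h, by simpa using hSmul h⟩⟩,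
      h, by simpa using hSmul h, ?_⟩
    rw [hw]
    simp [Matrix.mulVec_mulVec, Matrix.mul_assoc]
end

section
/- Let V be a finite-dimensional complex vector space with a nondegenerate alternating bilinear form ω, W ⊆ V a coisotropic subspace, L' a subspace with W° ⊆ L' ⊆ W, and L ⊆ V any subspace. Let π : V → V/W° be the quotient map. Then finrank(L ∩ L') = finrank(L ∩ W°) + finrank( π(L ∩ W) ∩ π(L') ). -/
/-- For `W` coisotropic, `W° ⊆ L' ⊆ W`, `L` any subspace, and `π : V → V/W°` the quotient map,
`dim (L ∩ L') = dim (L ∩ W°) + dim (π(L ∩ W) ∩ π(L'))`. -/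
theorem statement_7 {V : Type*} [AddCommGroup V] [Module ℂ V] [FiniteDimensional ℂ V]
    (ω : V →ₗ[ℂ] V →ₗ[ℂ] ℂ)
    (halt : ∀ x, ω x x = 0)
    (hnondeg : ∀ x, (∀ y, ω x y = 0) → x = 0)
    (W L' L : Submodule ℂ V)
    (hW : sympOrth ω W ≤ W)
    (h1 : sympOrth ω W ≤ L') (h2 : L' ≤ W) :
    Module.finrank ℂ ↥(L ⊓ L')
      = Module.finrank ℂ ↥(L ⊓ sympOrth ω W)
        + Module.finrank ℂ ↥(Submodule.map (sympOrth ω W).mkQ (L ⊓ W)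
            ⊓ Submodule.map (sympOrth ω W).mkQ L') := by
  set K := sympOrth ω W with hK
  -- Step 1: π(L ⊓ W) ⊓ π(L') = π(L ⊓ L')
  have hsur : Function.Surjective K.mkQ := Submodule.mkQ_surjective K
  have step1 : Submodule.map K.mkQ (L ⊓ W) ⊓ Submodule.map K.mkQ L'
      = Submodule.map K.mkQ (L ⊓ L') := by
    have e1 : Submodule.map K.mkQ (L ⊓ W) ⊓ Submodule.map K.mkQ L'
        = Submodule.map K.mkQ (Submodule.comap K.mkQ
            (Submodule.map K.mkQ (L ⊓ W) ⊓ Submodule.map K.mkQ L')) :=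
      (Submodule.map_comap_eq_of_surjective hsur _).symm
    rw [e1, Submodule.comap_inf, Submodule.comap_map_eq, Submodule.comap_map_eq,
      Submodule.ker_mkQ]
    have e2 : (L ⊓ W ⊔ K) ⊓ (L' ⊔ K) = (L ⊓ L') ⊔ K := by
      rw [sup_eq_left.mpr h1, sup_comm (L ⊓ W) K, sup_inf_assoc_of_le _ h1, inf_assoc,
        inf_eq_right.mpr h2, sup_comm]
    rw [e2, Submodule.map_sup, Submodule.mkQ_map_self, sup_bot_eq]
  rw [step1]
  -- Step 2: rank-nullity for mkQ restricted to L ⊓ L'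
  set f : ↥(L ⊓ L') →ₗ[ℂ] V ⧸ K := K.mkQ ∘ₗ (L ⊓ L').subtype with hf
  have hrange : LinearMap.range f = Submodule.map K.mkQ (L ⊓ L') := by
    rw [hf, LinearMap.range_comp, Submodule.range_subtype]
  have hker : LinearMap.ker f = Submodule.comap (L ⊓ L').subtype (L ⊓ K) := by
    rw [hf, LinearMap.ker_comp, Submodule.ker_mkQ]
    ext x
    simp only [Submodule.mem_comap, Submodule.mem_inf]
    constructor
    · intro hx
      exact ⟨x.2.1, hx⟩
    · intro hx
      exact hx.2
  have hLK : L ⊓ K ≤ L ⊓ L' := inf_le_inf_left L h1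
  have hkerrank : Module.finrank ℂ (LinearMap.ker f) = Module.finrank ℂ ↥(L ⊓ K) := by
    rw [hker]
    exact (Submodule.comapSubtypeEquivOfLe hLK).finrank_eq
  have hrn := LinearMap.finrank_range_add_finrank_ker f
  rw [hrange, hkerrank] at hrn
  omega
end

section
/- Let α, β, γ be finite types, R a field, and M a matrix indexed by α ⊕ β with blocks A = M|_{α×α}, B = M|_{α×β}, C = M|_{β×α}, D = M|_{β×β}, where D is invertible. Then for all injections e₁, e₂ : γ → α, det( M.submatrix (Sum.elim (Sum.inl ∘ e₁) Sum.inr) (Sum.elim (Sum.inl ∘ e₂) Sum.inr) ) = det D · det( (A − B·D⁻¹·C).submatrix e₁ e₂ ). In words: every minor of M whose rows and columns contain the full block β factors as det D times the corresponding minor of the Schur complement A − B D⁻¹ C. (These are exactly the coefficients of the Grassmann-algebra identity R_{F→∂F}(exp η̄Qη) = det(Q|_{F∖∂F}) · exp(η̄ Q_{∂F} η).) -/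
open Matrix

/-- Every minor of a block matrix `M = [[A,B],[C,D]]` (with `D` invertible) whose rows and
columns contain the full block `β` factors as `det D` times the corresponding minor of the
Schur complement `A − B D⁻¹ C`. -/
theorem statement_9 {α β γ : Type*} [Fintype α] [Fintype β] [Fintype γ]
    [DecidableEq α] [DecidableEq β] [DecidableEq γ]
    {R : Type*} [Field R]
    (M : Matrix (α ⊕ β) (α ⊕ β) R)
    (A : Matrix α α R) (hA : A = M.submatrix Sum.inl Sum.inl)
    (B : Matrix α β R) (hB : B = M.submatrix Sum.inl Sum.inr)
    (C : Matrix β α R) (hC : C = M.submatrix Sum.inr Sum.inl)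
    (D : Matrix β β R) (hD : D = M.submatrix Sum.inr Sum.inr)
    (hDinv : IsUnit D.det)
    (e₁ e₂ : γ → α) (he₁ : Function.Injective e₁) (he₂ : Function.Injective e₂) :
    (M.submatrix (Sum.elim (Sum.inl ∘ e₁) Sum.inr) (Sum.elim (Sum.inl ∘ e₂) Sum.inr)).det
      = D.det * ((A - B * D⁻¹ * C).submatrix e₁ e₂).det := by
  have hM : M.submatrix (Sum.elim (Sum.inl ∘ e₁) Sum.inr) (Sum.elim (Sum.inl ∘ e₂) Sum.inr)
      = fromBlocks (A.submatrix e₁ e₂) (B.submatrix e₁ id) (C.submatrix id e₂) D := by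
    subst hA hB hC hD
    ext i j
    cases i <;> cases j <;> rfl
  have : Invertible D := D.invertibleOfIsUnitDet hDinv
  rw [hM, det_fromBlocks₂₂, invOf_eq_nonsing_inv]
  congr 1
end

section
/- Let Q : ℂ → Matrix (Fin K) (Fin K) ℂ have all entries holomorphic on ℂ, with Q(λ) symmetric for every λ, Q(t) a real matrix for every real t, and suppose that for every λ with Im λ > 0 and every nonzero real vector C : Fin K → ℝ one has Im(Cᵀ·Q(λ)·C) > 0. Then for every real t₀, the derivative Q'(t₀) is a real symmetric positive definite matrix: for every nonzero real vector C, the number Cᵀ·Q'(t₀)·C is real and strictly positive. -/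
/-!
The quadratic form `f z = Cᵀ Q(z) C` is entire, real at `t₀` and maps the upper half-plane into
itself. Near `t₀` write `f z - f t₀ = (z - t₀)ⁿ h z` with `h t₀ = a ≠ 0`. Approaching `t₀` along
a ray `t₀ + ε u` with `Im u > 0` forces `Im (uⁿ a) ≥ 0` for all such `u`; since `uⁿ` sweeps
the angles `(0, nπ)`, this leaves only `n = 1` and `arg a = 0`, i.e. `f' t₀ = a > 0`.
-/

open Matrix Real Filter Topology
open scoped ComplexOrder

lemma eq_one_and_eq_zero_of_forall_sin_nonneg {n : ℕ} (hn : n ≠ 0) {φ : ℝ}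
    (hφ : φ ∈ Set.Ioc (-π) π) (h : ∀ θ ∈ Set.Ioo 0 π, 0 ≤ sin (n * θ + φ)) :
    n = 1 ∧ φ = 0 := by
  have hn' : (0 : ℝ) < n := by positivity
  -- the witness `θ = (ψ - φ) / n` is admissible whenever `ψ - φ ∈ (0, nπ)`
  have key (ψ : ℝ) (hψ : sin ψ < 0) (h0 : 0 < ψ - φ) (hπ : ψ - φ < n * π) : False := by
    have := h ((ψ - φ) / n) ⟨by positivity, by rwa [div_lt_iff₀ hn', mul_comm]⟩
    rw [mul_div_cancel₀ _ hn'.ne', sub_add_cancel] at this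
    exact this.not_gt hψ
  have hπn : π ≤ n * π :=
    le_mul_of_one_le_left pi_pos.le (by exact_mod_cast Nat.one_le_iff_ne_zero.mpr hn)
  obtain ⟨hφl, hφr⟩ := hφ
  rcases lt_trichotomy φ 0 with hφ0 | rfl | hφ0
  · exact (key (φ / 2) (sin_neg_of_neg_of_neg_pi_lt (by linarith) (by linarith))
      (by linarith) (by linarith)).elim
  · refine ⟨?_, rfl⟩
    by_contra hn1
    have h2n : 2 * π ≤ n * π := by
      gcongr; exact_mod_cast (Nat.two_le_iff n).mpr ⟨hn, hn1⟩
    exact key (π / 2 + π) (by rw [sin_add_pi, sin_pi_div_two]; norm_num)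
      (by linarith [pi_pos]) (by linarith [pi_pos])
  · have := sin_pos_of_pos_of_lt_pi (x := φ / 2) (by linarith) (by linarith)
    exact (key (φ / 2 + π) (by rw [sin_add_pi]; linarith) (by linarith) (by linarith)).elim

lemma eq_one_and_pos_of_forall_im_pow_mul_nonneg {a : ℂ} (ha : a ≠ 0) {n : ℕ} (hn : n ≠ 0)
    (h : ∀ u : ℂ, 0 < u.im → 0 ≤ (u ^ n * a).im) : n = 1 ∧ 0 < a := by
  have hsin : ∀ θ ∈ Set.Ioo 0 π, 0 ≤ sin (n * θ + a.arg) := by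
    intro θ hθ
    have hu : 0 < (Complex.exp (θ * Complex.I)).im := by
      rw [Complex.exp_ofReal_mul_I_im]; exact sin_pos_of_pos_of_lt_pi hθ.1 hθ.2
    have hpolar : Complex.exp (θ * Complex.I) ^ n * a
        = ‖a‖ * Complex.exp ((n * θ + a.arg : ℝ) * Complex.I) := by
      conv_lhs => rw [← Complex.norm_mul_exp_arg_mul_I a]
      rw [← Complex.exp_nat_mul, mul_left_comm, ← Complex.exp_add]
      push_cast; ring_nf
    have := h _ hu
    rw [hpolar, Complex.im_ofReal_mul, Complex.exp_ofReal_mul_I_im] at this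
    exact nonneg_of_mul_nonneg_right this (norm_pos_iff.mpr ha)
  obtain ⟨rfl, harg⟩ := eq_one_and_eq_zero_of_forall_sin_nonneg hn a.arg_mem_Ioc hsin
  exact ⟨rfl, (Complex.arg_eq_zero_iff_zero_le.mp harg).lt_of_ne' ha⟩

lemma tendsto_add_ofReal_mul_nhdsGT (x u : ℂ) :
    Tendsto (fun ε : ℝ => x + ε * u) (𝓝[>] 0) (𝓝 x) := by
  have hcont : Continuous fun ε : ℝ => x + ε * u := by fun_prop
  simpa using hcont.tendsto 0 |>.mono_left nhdsWithin_le_nhds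

lemma eventually_nhdsGT_add_ofReal_mul {P : ℂ → Prop} {x u : ℂ} (hu : 0 < u.im)
    (hP : ∀ᶠ z in 𝓝 x, 0 < (z - x).im → P z) : ∀ᶠ ε : ℝ in 𝓝[>] 0, P (x + ε * u) := by
  filter_upwards [(tendsto_add_ofReal_mul_nhdsGT x u).eventually hP, self_mem_nhdsWithin]
    with ε hε hεpos
  exact hε (by simpa using mul_pos (Set.mem_Ioi.mp hεpos) hu)

lemma im_pow_mul_nonneg_of_eventually {h : ℂ → ℂ} {x u : ℂ} {n : ℕ} (hh : ContinuousAt h x)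
    (hu : 0 < u.im) (hpos : ∀ᶠ z in 𝓝 x, 0 < (z - x).im → 0 < ((z - x) ^ n * h z).im) :
    0 ≤ (u ^ n * h x).im := by
  have hlim : Tendsto (fun ε : ℝ => (u ^ n * h (x + ε * u)).im) (𝓝[>] 0) (𝓝 (u ^ n * h x).im) :=
    (Complex.continuous_im.tendsto _).comp
      (tendsto_const_nhds.mul (hh.tendsto.comp (tendsto_add_ofReal_mul_nhdsGT x u)))
  refine ge_of_tendsto hlim ?_
  filter_upwards [eventually_nhdsGT_add_ofReal_mul hu hpos, self_mem_nhdsWithin] with ε hε hεpos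
  have : ((x + ε * u - x) ^ n * h (x + ε * u)).im = ε ^ n * (u ^ n * h (x + ε * u)).im := by
    rw [add_sub_cancel_left, mul_pow, mul_assoc, ← Complex.ofReal_pow, Complex.im_ofReal_mul]
  rw [this] at hε
  exact (pos_of_mul_pos_right hε (pow_nonneg (le_of_lt hεpos) n)).le

theorem AnalyticAt.deriv_pos_of_im_pos {f : ℂ → ℂ} {x : ℝ} (hf : AnalyticAt ℂ f x)
    (hx : (f x).im = 0) (hup : ∀ᶠ z in 𝓝 (x : ℂ), 0 < z.im → 0 < (f z).im) :
    0 < deriv f x := by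
  set g : ℂ → ℂ := fun z => f z - f x
  have hg : AnalyticAt ℂ g x := hf.sub analyticAt_const
  have hgup : ∀ᶠ z : ℂ in 𝓝 x, 0 < (z - x).im → 0 < (g z).im :=
    hup.mono fun z hz hzx => by simpa [g, hx] using hz (by simpa using hzx)
  have hfin : analyticOrderAt g x ≠ ⊤ := fun htop => by
    have hnever : ∀ᶠ z : ℂ in 𝓝 x, 0 < (z - x).im → False := by
      filter_upwards [analyticOrderAt_eq_top.mp htop, hgup] with z hz hzup hzx
      simpa [hz] using hzup hzx
    obtain ⟨_, hfalse⟩ :=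
      (eventually_nhdsGT_add_ofReal_mul (u := Complex.I) (by simp) hnever).exists
    exact hfalse
  obtain ⟨n, hn⟩ := ENat.ne_top_iff_exists.mp hfin
  obtain ⟨h, hh, ha, hfac⟩ := hg.analyticOrderAt_eq_natCast.mp hn.symm
  have hn0 : n ≠ 0 := by
    rintro rfl
    exact analyticOrderAt_ne_zero.mpr ⟨hg, sub_self _⟩ hn.symm
  have hdir (u : ℂ) (hu : 0 < u.im) : 0 ≤ (u ^ n * h x).im := by
    refine im_pow_mul_nonneg_of_eventually hh.continuousAt hu ?_
    filter_upwards [hfac, hgup] with z hz hzup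
    simpa [hz] using hzup
  obtain ⟨rfl, hpos⟩ := eq_one_and_pos_of_forall_im_pow_mul_nonneg ha hn0 hdir
  have hgderiv : HasDerivAt g (h x) x := by
    have hprod := ((hasDerivAt_id (x : ℂ)).sub_const (x : ℂ)).mul hh.differentiableAt.hasDerivAt
    simp only [id, sub_self, zero_mul, one_mul, add_zero] at hprod
    exact hprod.congr_of_eventuallyEq (hfac.mono fun z hz => by simpa using hz)
  rwa [← deriv_sub_const (f x), hgderiv.deriv]

theorem HasDerivAt.dotProduct_mulVec {𝕜 : Type*} [NontriviallyNormedField 𝕜] {m n : Type*}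
    [Fintype m] [Fintype n] {Q : 𝕜 → Matrix m n 𝕜} {Q' : Matrix m n 𝕜} {x : 𝕜}
    (hQ : ∀ i j, HasDerivAt (fun z => Q z i j) (Q' i j) x) (v : m → 𝕜) (w : n → 𝕜) :
    HasDerivAt (fun z => v ⬝ᵥ Q z *ᵥ w) (v ⬝ᵥ Q' *ᵥ w) x := by
  simp only [dotProduct, mulVec]
  exact .fun_sum fun i _ =>
    (HasDerivAt.fun_sum fun j _ => (hQ i j).mul_const (w j)).const_mul (v i)

theorem statement_12_general {K : ℕ} (Q : ℂ → Matrix (Fin K) (Fin K) ℂ)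
    (hdiff : ∀ i j : Fin K, Differentiable ℂ fun z : ℂ => Q z i j)
    (hreal : ∀ (t : ℝ) (i j : Fin K), (Q (t : ℂ) i j).im = 0)
    (hup : ∀ z : ℂ, 0 < z.im → ∀ C : Fin K → ℝ, C ≠ 0 →
      0 < ((fun i => (C i : ℂ)) ⬝ᵥ (Q z *ᵥ fun i => (C i : ℂ))).im)
    (t₀ : ℝ) (C : Fin K → ℝ) (hC : C ≠ 0) :
    ((fun i => (C i : ℂ)) ⬝ᵥ
        ((Matrix.of fun i j => deriv (fun z : ℂ => Q z i j) (t₀ : ℂ)) *ᵥ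
          fun i => (C i : ℂ))).im = 0 ∧
      0 < ((fun i => (C i : ℂ)) ⬝ᵥ
        ((Matrix.of fun i j => deriv (fun z : ℂ => Q z i j) (t₀ : ℂ)) *ᵥ
          fun i => (C i : ℂ))).re := by
  set c : Fin K → ℂ := fun i => (C i : ℂ)
  have hderiv (z : ℂ) : HasDerivAt (fun z => c ⬝ᵥ Q z *ᵥ c)
      (c ⬝ᵥ (Matrix.of fun i j => deriv (fun z : ℂ => Q z i j) z) *ᵥ c) z :=
    HasDerivAt.dotProduct_mulVec (fun i j => (hdiff i j z).hasDerivAt) c c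
  have hanalytic : AnalyticAt ℂ (fun z => c ⬝ᵥ Q z *ᵥ c) t₀ :=
    Differentiable.analyticAt (fun z => (hderiv z).differentiableAt) _
  have hreal₀ : (c ⬝ᵥ Q t₀ *ᵥ c).im = 0 := by
    simp [c, dotProduct, mulVec, Complex.im_sum, Complex.mul_im, hreal]
  have hpos := hanalytic.deriv_pos_of_im_pos hreal₀ (.of_forall fun z hz => hup z hz C hC)
  rw [(hderiv t₀).deriv] at hpos
  exact ⟨(Complex.pos_iff.mp hpos).2.symm, (Complex.pos_iff.mp hpos).1⟩

/-- Let `Q : ℂ → Matrix (Fin K) (Fin K) ℂ` have entire holomorphic entries, with `Q(λ)`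
symmetric, `Q(t)` real for real `t`, and `Im (Cᵀ Q(λ) C) > 0` for `Im λ > 0` and all nonzero
real vectors `C`. Then for every real `t₀` and every nonzero real vector `C`, the number
`Cᵀ Q'(t₀) C` is real and strictly positive (`Q'(t₀)` is real symmetric positive definite). -/
theorem statement_12 {K : ℕ} (Q : ℂ → Matrix (Fin K) (Fin K) ℂ)
    (hdiff : ∀ i j : Fin K, Differentiable ℂ fun z : ℂ => Q z i j)
    (hsym : ∀ z : ℂ, (Q z).IsSymm)
    (hreal : ∀ (t : ℝ) (i j : Fin K), (Q (t : ℂ) i j).im = 0)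
    (hup : ∀ z : ℂ, 0 < z.im → ∀ C : Fin K → ℝ, C ≠ 0 →
      0 < ((fun i => (C i : ℂ)) ⬝ᵥ (Q z *ᵥ fun i => (C i : ℂ))).im)
    (t₀ : ℝ) (C : Fin K → ℝ) (hC : C ≠ 0) :
    ((fun i => (C i : ℂ)) ⬝ᵥ
        ((Matrix.of fun i j => deriv (fun z : ℂ => Q z i j) (t₀ : ℂ)) *ᵥ
          fun i => (C i : ℂ))).im = 0 ∧
      0 < ((fun i => (C i : ℂ)) ⬝ᵥ
        ((Matrix.of fun i j => deriv (fun z : ℂ => Q z i j) (t₀ : ℂ)) *ᵥ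
          fun i => (C i : ℂ))).re :=
  statement_12_general Q hdiff hreal hup t₀ C hC
end

section
/- Let F be a finite type, ∂F ⊆ F, and Q a complex symmetric matrix indexed by F. Define T(L_Q) = {(f|_{∂F}, (Q·f)|_{∂F}) : f : F → ℂ, (Q·f)|_{F∖∂F} = 0} ⊆ (∂F → ℂ) × (∂F → ℂ). Then: (a) T(L_Q) ∩ ((∂F → ℂ) × {0}) = {(f|_{∂F}, 0) : Q·f = 0}, and its dimension equals dim ker Q − dim{f : Q·f = 0 and f|_{∂F} = 0}; (b) T(L_Q) ∩ ({0} × (∂F → ℂ)) = {(0, (Q·f)|_{∂F}) : f|_{∂F} = 0 and (Q·f)|_{F∖∂F} = 0}, and its dimension equals dim{f : f|_{∂F} = 0 and (Q·f)|_{F∖∂F} = 0} − dim{f : Q·f = 0 and f|_{∂F} = 0}. (For Q = Q_ρ + λ I_b this identifies the multiplicity of λ as a Neumann-only, respectively Dirichlet-only, eigenvalue with the dimension of the intersection of the symplectic reduction of L_Q with ℂ^{∂F} ⊕ 0, respectively 0 ⊕ (ℂ^{∂F})*.) -/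
/-!
`T(L_Q)` is the image of `solSet Q s` under the boundary-value map `β f = (f|_s, (Q f)|_s)`,
and intersecting an image with a subspace pulls the subspace back:
`β K ⊓ W = β (K ⊓ β⁻¹ W)`.
Pulling back `ℂ^s ⊕ 0` adds the condition `(Q f)|_s = 0`, which together with `solSet` gives
`ker Q`; pulling back `0 ⊕ ℂ^s` adds the Dirichlet condition `f|_s = 0`. The dimensions then
follow from rank–nullity for `β` restricted to these subspaces, on each of which the kernel of
`β` is the Neumann–Dirichlet kernel `ker Q ⊓ vanishOn s`.
-/

open Matrix

noncomputable section

/-- Functions vanishing on `s`. -/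
def vanishOn {F : Type*} (s : Set F) : Submodule ℂ (F → ℂ) where
  carrier := {f | ∀ x ∈ s, f x = 0}
  add_mem' := by intro a b ha hb x hx; simp [ha x hx, hb x hx]
  zero_mem' := by intro x hx; simp
  smul_mem' := by intro t f hf x hx; simp [hf x hx]

/-- Solutions `f` of `(Q·f)|_{F ∖ s} = 0`. -/
def solSet {F : Type*} [Fintype F] (Q : Matrix F F ℂ) (s : Set F) :
    Submodule ℂ (F → ℂ) where
  carrier := {f | ∀ x, x ∉ s → (Q *ᵥ f) x = 0}
  add_mem' := by
    intro a b ha hb x hx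
    simp only [Matrix.mulVec_add, Pi.add_apply, ha x hx, hb x hx, add_zero]
  zero_mem' := by intro x hx; simp
  smul_mem' := by
    intro t f hf x hx
    simp only [Matrix.mulVec_smul, Pi.smul_apply, hf x hx, smul_zero]

/-- Boundary-values map `f ↦ (f|_s, (Q·f)|_s)`. -/
def bval {F : Type*} [Fintype F] (Q : Matrix F F ℂ) (s : Set F) :
    (F → ℂ) →ₗ[ℂ] ({x // x ∈ s} → ℂ) × ({x // x ∈ s} → ℂ) :=
  LinearMap.prod (LinearMap.funLeft ℂ ℂ Subtype.val)
    ((LinearMap.funLeft ℂ ℂ Subtype.val).comp Q.mulVecLin)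

/-- The symplectic reduction `T(L_Q) = {(f|_{∂F}, (Q·f)|_{∂F}) : (Q·f)|_{F∖∂F} = 0}`. -/
def Tred {F : Type*} [Fintype F] (Q : Matrix F F ℂ) (s : Set F) :
    Submodule ℂ (({x // x ∈ s} → ℂ) × ({x // x ∈ s} → ℂ)) :=
  Submodule.map (bval Q s) (solSet Q s)

theorem Submodule.finrank_map_eq_sub_finrank_inf_ker {K V W : Type*} [DivisionRing K]
    [AddCommGroup V] [Module K V] [AddCommGroup W] [Module K W] [FiniteDimensional K V]
    (f : V →ₗ[K] W) (p : Submodule K V) :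
    Module.finrank K (p.map f) =
      Module.finrank K p - Module.finrank K ↥(p ⊓ LinearMap.ker f) := by
  have h := (f.domRestrict p).finrank_range_add_finrank_ker
  have hker : (LinearMap.ker f).comap p.subtype = (p ⊓ LinearMap.ker f).comap p.subtype := by
    rw [Submodule.comap_inf, Submodule.comap_subtype_self, top_inf_eq]
  rw [LinearMap.range_domRestrict, LinearMap.ker_domRestrict, hker,
    (Submodule.comapSubtypeEquivOfLe inf_le_left).finrank_eq] at h
  omega

section
variable {F : Type*} [Fintype F] (Q : Matrix F F ℂ) (s : Set F)

theorem comap_bval_ker_fst :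
    (LinearMap.ker (LinearMap.fst ℂ ({x // x ∈ s} → ℂ) ({x // x ∈ s} → ℂ))).comap (bval Q s)
      = vanishOn s := by
  ext f
  simp [bval, vanishOn, funext_iff]

theorem comap_bval_ker_snd :
    (LinearMap.ker (LinearMap.snd ℂ ({x // x ∈ s} → ℂ) ({x // x ∈ s} → ℂ))).comap (bval Q s)
      = (vanishOn s).comap Q.mulVecLin := by
  ext f
  simp [bval, vanishOn, funext_iff]

theorem ker_bval : LinearMap.ker (bval Q s) = vanishOn s ⊓ (vanishOn s).comap Q.mulVecLin := by
  rw [← comap_bval_ker_snd Q s, ← comap_bval_ker_fst Q s, ← Submodule.comap_inf,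
    ← LinearMap.ker_prod, LinearMap.pair_fst_snd, LinearMap.ker_id, LinearMap.ker]

theorem solSet_inf_comap_mulVecLin_vanishOn :
    solSet Q s ⊓ (vanishOn s).comap Q.mulVecLin = LinearMap.ker Q.mulVecLin := by
  ext f
  simp only [Submodule.mem_inf, Submodule.mem_comap, LinearMap.mem_ker, funext_iff]
  exact ⟨fun ⟨hout, hin⟩ x => (em (x ∈ s)).elim (hin x) (hout x),
    fun h => ⟨fun x _ => h x, fun x _ => h x⟩⟩

theorem ker_mulVecLin_inf_ker_bval :
    LinearMap.ker Q.mulVecLin ⊓ LinearMap.ker (bval Q s) =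
      LinearMap.ker Q.mulVecLin ⊓ vanishOn s := by
  rw [ker_bval, ← solSet_inf_comap_mulVecLin_vanishOn Q s]
  ext f
  simp only [Submodule.mem_inf]
  tauto

theorem solSet_inf_vanishOn_inf_ker_bval :
    solSet Q s ⊓ vanishOn s ⊓ LinearMap.ker (bval Q s) =
      LinearMap.ker Q.mulVecLin ⊓ vanishOn s := by
  rw [ker_bval, ← solSet_inf_comap_mulVecLin_vanishOn Q s]
  ext f
  simp only [Submodule.mem_inf]
  tauto

theorem tred_inf_ker_snd :
    Tred Q s ⊓ LinearMap.ker (LinearMap.snd ℂ ({x // x ∈ s} → ℂ) ({x // x ∈ s} → ℂ))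
      = (LinearMap.ker Q.mulVecLin).map (bval Q s) := by
  rw [Tred, Submodule.map_inf_eq_map_inf_comap, comap_bval_ker_snd,
    solSet_inf_comap_mulVecLin_vanishOn]

theorem tred_inf_ker_fst :
    Tred Q s ⊓ LinearMap.ker (LinearMap.fst ℂ ({x // x ∈ s} → ℂ) ({x // x ∈ s} → ℂ))
      = (solSet Q s ⊓ vanishOn s).map (bval Q s) := by
  rw [Tred, Submodule.map_inf_eq_map_inf_comap, comap_bval_ker_fst]

end

theorem statement_14_general {F : Type*} [Fintype F]
    (s : Set F) (Q : Matrix F F ℂ) :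
    Tred Q s ⊓ LinearMap.ker (LinearMap.snd ℂ ({x // x ∈ s} → ℂ) ({x // x ∈ s} → ℂ))
        = Submodule.map (bval Q s) (LinearMap.ker Q.mulVecLin) ∧
      Module.finrank ℂ
          ↥(Tred Q s ⊓ LinearMap.ker (LinearMap.snd ℂ ({x // x ∈ s} → ℂ) ({x // x ∈ s} → ℂ)))
        = Module.finrank ℂ ↥(LinearMap.ker Q.mulVecLin)
            - Module.finrank ℂ ↥(LinearMap.ker Q.mulVecLin ⊓ vanishOn s) ∧
      Tred Q s ⊓ LinearMap.ker (LinearMap.fst ℂ ({x // x ∈ s} → ℂ) ({x // x ∈ s} → ℂ))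
        = Submodule.map (bval Q s) (solSet Q s ⊓ vanishOn s) ∧
      Module.finrank ℂ
          ↥(Tred Q s ⊓ LinearMap.ker (LinearMap.fst ℂ ({x // x ∈ s} → ℂ) ({x // x ∈ s} → ℂ)))
        = Module.finrank ℂ ↥(solSet Q s ⊓ vanishOn s)
            - Module.finrank ℂ ↥(LinearMap.ker Q.mulVecLin ⊓ vanishOn s) := by
  refine ⟨tred_inf_ker_snd Q s, ?_, tred_inf_ker_fst Q s, ?_⟩
  · rw [tred_inf_ker_snd, Submodule.finrank_map_eq_sub_finrank_inf_ker,
      ker_mulVecLin_inf_ker_bval]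
  · rw [tred_inf_ker_fst, Submodule.finrank_map_eq_sub_finrank_inf_ker,
      solSet_inf_vanishOn_inf_ker_bval]

/-- (a) `T(L_Q) ∩ (ℂ^{∂F} ⊕ 0) = {(f|_{∂F}, 0) : Q·f = 0}` with dimension
`dim ker Q − dim ker^{ND} Q`; (b) `T(L_Q) ∩ (0 ⊕ ℂ^{∂F}) = {(0, (Q·f)|_{∂F}) : f|_{∂F} = 0,
(Q·f)|_{F∖∂F} = 0}` with dimension `dim {f : f|_{∂F} = 0, (Q·f)|_{F∖∂F} = 0} − dim ker^{ND} Q`,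
where `ker^{ND} Q = {f : Q·f = 0, f|_{∂F} = 0}`. -/
theorem statement_14 {F : Type*} [Fintype F] [DecidableEq F]
    (s : Set F) (Q : Matrix F F ℂ) (hQsym : Q.IsSymm) :
    Tred Q s ⊓ LinearMap.ker (LinearMap.snd ℂ ({x // x ∈ s} → ℂ) ({x // x ∈ s} → ℂ))
        = Submodule.map (bval Q s) (LinearMap.ker Q.mulVecLin) ∧
      Module.finrank ℂ
          ↥(Tred Q s ⊓ LinearMap.ker (LinearMap.snd ℂ ({x // x ∈ s} → ℂ) ({x // x ∈ s} → ℂ)))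
        = Module.finrank ℂ ↥(LinearMap.ker Q.mulVecLin)
            - Module.finrank ℂ ↥(LinearMap.ker Q.mulVecLin ⊓ vanishOn s) ∧
      Tred Q s ⊓ LinearMap.ker (LinearMap.fst ℂ ({x // x ∈ s} → ℂ) ({x // x ∈ s} → ℂ))
        = Submodule.map (bval Q s) (solSet Q s ⊓ vanishOn s) ∧
      Module.finrank ℂ
          ↥(Tred Q s ⊓ LinearMap.ker (LinearMap.fst ℂ ({x // x ∈ s} → ℂ) ({x // x ∈ s} → ℂ)))
        = Module.finrank ℂ ↥(solSet Q s ⊓ vanishOn s)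
            - Module.finrank ℂ ↥(LinearMap.ker Q.mulVecLin ⊓ vanishOn s) :=
  statement_14_general s Q
end
end

section
/- Let u₀, u₁ ∈ ℂ with 2u₀ + u₁ ≠ 0 and u₀ + 5u₁ ≠ 0. Index V₆ = Fin 3 ⊕ Fin 3 (boundary vertices bᵢ = inl i, interior midpoints mᵢ = inr i) and let a = (u₀ + 2u₁)/3, c = (u₀ − u₁)/3. Define the 6×6 complex matrix Q₁ by: Q₁(bᵢ,bᵢ) = a; Q₁(mᵢ,mᵢ) = 2a; Q₁(bᵢ,bⱼ) = 0 for i ≠ j; Q₁(bᵢ,mⱼ) = Q₁(mⱼ,bᵢ) = c for j ≠ i and 0 for j = i; Q₁(mᵢ,mⱼ) = c for i ≠ j. Then the interior block D = Q₁|_{m×m} is invertible and the Schur complement A − B D⁻¹ Bᵀ (with A = Q₁|_{b×b}, B = Q₁|_{b×m}) equals u₀'·p₀ + u₁'·p₁, where p₀ is the 3×3 matrix with all entries 1/3, p₁ = I₃ − p₀, u₀' = 3u₀u₁/(2u₀ + u₁) and u₁' = 3u₁(u₀ + u₁)/(u₀ + 5u₁). (This is the explicit computation of the renormalization map T(u₀,u₁)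 = (3u₀u₁/(2u₀+u₁), 3u₁(u₀+u₁)/(u₀+5u₁)) for the Sierpinski gasket.) -/
open Matrix

set_option maxHeartbeats 1000000

/-- Explicit computation of the renormalization map for the Sierpinski gasket: the level-1
glued matrix `Q₁` (indexed by the 3 boundary vertices `Sum.inl i` and the 3 midpoints
`Sum.inr i`) has invertible interior block `D`, and its Schur complement onto the boundary is
`u₀'·p₀ + u₁'·p₁` with `u₀' = 3u₀u₁/(2u₀+u₁)` and `u₁' = 3u₁(u₀+u₁)/(u₀+5u₁)`. -/
theorem statement_16 (u₀ u₁ : ℂ) (h1 : 2 * u₀ + u₁ ≠ 0) (h2 : u₀ + 5 * u₁ ≠ 0)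
    (a c : ℂ) (ha : a = (u₀ + 2 * u₁) / 3) (hc : c = (u₀ - u₁) / 3)
    (Q₁ : Matrix (Fin 3 ⊕ Fin 3) (Fin 3 ⊕ Fin 3) ℂ)
    (hQ₁ : Q₁ = Matrix.of fun x y =>
      match x, y with
      | Sum.inl i, Sum.inl j => if i = j then a else 0
      | Sum.inl i, Sum.inr j => if j = i then 0 else c
      | Sum.inr i, Sum.inl j => if i = j then 0 else c
      | Sum.inr i, Sum.inr j => if i = j then 2 * a else c)
    (p₀ p₁ : Matrix (Fin 3) (Fin 3) ℂ)
    (hp₀ : p₀ = Matrix.of fun _ _ => 1 / 3) (hp₁ : p₁ = 1 - p₀)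
    (u₀' u₁' : ℂ) (hu₀' : u₀' = 3 * u₀ * u₁ / (2 * u₀ + u₁))
    (hu₁' : u₁' = 3 * u₁ * (u₀ + u₁) / (u₀ + 5 * u₁)) :
    IsUnit (Q₁.submatrix Sum.inr Sum.inr).det ∧
      Q₁.submatrix Sum.inl Sum.inl -
          Q₁.submatrix Sum.inl Sum.inr * (Q₁.submatrix Sum.inr Sum.inr)⁻¹ *
            (Q₁.submatrix Sum.inl Sum.inr)ᵀ
        = u₀' • p₀ + u₁' • p₁ := by
  subst hQ₁ hp₀ hp₁ hu₀' hu₁' ha hc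
  set s : ℂ := u₀ + 5 * u₁ with hs
  set t : ℂ := 2 * u₀ + u₁ with ht
  clear_value s t
  have hdet : (Matrix.of (fun x y =>
      match x, y with
      | Sum.inl i, Sum.inl j => if i = j then (u₀ + 2 * u₁) / 3 else 0
      | Sum.inl i, Sum.inr j => if j = i then 0 else (u₀ - u₁) / 3
      | Sum.inr i, Sum.inl j => if i = j then 0 else (u₀ - u₁) / 3
      | Sum.inr i, Sum.inr j => if i = j then 2 * ((u₀ + 2 * u₁) / 3) else (u₀ - u₁) / 3
      : Fin 3 ⊕ Fin 3 → Fin 3 ⊕ Fin 3 → ℂ)).submatrix Sum.inr Sum.inr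
      = !![2 * ((u₀ + 2 * u₁) / 3), (u₀ - u₁) / 3, (u₀ - u₁) / 3;
           (u₀ - u₁) / 3, 2 * ((u₀ + 2 * u₁) / 3), (u₀ - u₁) / 3;
           (u₀ - u₁) / 3, (u₀ - u₁) / 3, 2 * ((u₀ + 2 * u₁) / 3)] := by
    ext i j
    fin_cases i <;> fin_cases j <;> rfl
  have hA : (Matrix.of (fun x y =>
      match x, y with
      | Sum.inl i, Sum.inl j => if i = j then (u₀ + 2 * u₁) / 3 else 0
      | Sum.inl i, Sum.inr j => if j = i then 0 else (u₀ - u₁) / 3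
      | Sum.inr i, Sum.inl j => if i = j then 0 else (u₀ - u₁) / 3
      | Sum.inr i, Sum.inr j => if i = j then 2 * ((u₀ + 2 * u₁) / 3) else (u₀ - u₁) / 3
      : Fin 3 ⊕ Fin 3 → Fin 3 ⊕ Fin 3 → ℂ)).submatrix Sum.inl Sum.inl
      = !![(u₀ + 2 * u₁) / 3, 0, 0; 0, (u₀ + 2 * u₁) / 3, 0; 0, 0, (u₀ + 2 * u₁) / 3] := by
    ext i j
    fin_cases i <;> fin_cases j <;> rfl
  have hB : (Matrix.of (fun x y =>
      match x, y with
      | Sum.inl i, Sum.inl j => if i = j then (u₀ + 2 * u₁) / 3 else 0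
      | Sum.inl i, Sum.inr j => if j = i then 0 else (u₀ - u₁) / 3
      | Sum.inr i, Sum.inl j => if i = j then 0 else (u₀ - u₁) / 3
      | Sum.inr i, Sum.inr j => if i = j then 2 * ((u₀ + 2 * u₁) / 3) else (u₀ - u₁) / 3
      : Fin 3 ⊕ Fin 3 → Fin 3 ⊕ Fin 3 → ℂ)).submatrix Sum.inl Sum.inr
      = !![0, (u₀ - u₁) / 3, (u₀ - u₁) / 3;
           (u₀ - u₁) / 3, 0, (u₀ - u₁) / 3;
           (u₀ - u₁) / 3, (u₀ - u₁) / 3, 0] := by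
    ext i j
    fin_cases i <;> fin_cases j <;> rfl
  rw [hdet, hA, hB]
  clear hdet hA hB
  have hw : (2 : ℂ) * s * t ≠ 0 := by
    intro h
    rcases mul_eq_zero.mp h with h' | h'
    · rcases mul_eq_zero.mp h' with h'' | h''
      · norm_num at h''
      · exact h2 h''
    · exact h1 h'
  constructor
  · have hD : !![2 * ((u₀ + 2 * u₁) / 3), (u₀ - u₁) / 3, (u₀ - u₁) / 3;
             (u₀ - u₁) / 3, 2 * ((u₀ + 2 * u₁) / 3), (u₀ - u₁) / 3;
             (u₀ - u₁) / 3, (u₀ - u₁) / 3, 2 * ((u₀ + 2 * u₁) / 3)].det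
        = 2 * t / 3 * (s / 3) ^ 2 := by
      simp [Matrix.det_fin_three, Matrix.vecHead, Matrix.vecTail]
      rw [hs, ht]
      ring
    rw [hD]
    refine isUnit_iff_ne_zero.mpr fun h => hw ?_
    have h' : t * s ^ 2 = 0 := by linear_combination (27 / 2 : ℂ) * h
    rcases mul_eq_zero.mp h' with h'' | h''
    · exact absurd h'' h1
    · exact absurd (sq_eq_zero_iff.mp h'') h2
  · have hDE : !![2 * ((u₀ + 2 * u₁) / 3), (u₀ - u₁) / 3, (u₀ - u₁) / 3;
             (u₀ - u₁) / 3, 2 * ((u₀ + 2 * u₁) / 3), (u₀ - u₁) / 3;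
             (u₀ - u₁) / 3, (u₀ - u₁) / 3, 2 * ((u₀ + 2 * u₁) / 3)] *
          !![9 * (u₀ + u₁), -3 * (u₀ - u₁), -3 * (u₀ - u₁);
             -3 * (u₀ - u₁), 9 * (u₀ + u₁), -3 * (u₀ - u₁);
             -3 * (u₀ - u₁), -3 * (u₀ - u₁), 9 * (u₀ + u₁)] = (2 * s * t) • 1 := by
      rw [Matrix.mul_fin_three, Matrix.one_fin_three, hs, ht]
      ext i j
      fin_cases i <;> fin_cases j <;>
        simp [Matrix.vecHead, Matrix.vecTail] <;> ring
    have hinv : (!![2 * ((u₀ + 2 * u₁) / 3), (u₀ - u₁) / 3, (u₀ - u₁) / 3;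
             (u₀ - u₁) / 3, 2 * ((u₀ + 2 * u₁) / 3), (u₀ - u₁) / 3;
             (u₀ - u₁) / 3, (u₀ - u₁) / 3, 2 * ((u₀ + 2 * u₁) / 3)])⁻¹
        = (2 * s * t)⁻¹ • !![9 * (u₀ + u₁), -3 * (u₀ - u₁), -3 * (u₀ - u₁);
             -3 * (u₀ - u₁), 9 * (u₀ + u₁), -3 * (u₀ - u₁);
             -3 * (u₀ - u₁), -3 * (u₀ - u₁), 9 * (u₀ + u₁)] := by
      apply Matrix.inv_eq_right_inv
      rw [Matrix.mul_smul, hDE, smul_smul, inv_mul_cancel₀ hw, one_smul]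
    have hBT : (!![(0 : ℂ), (u₀ - u₁) / 3, (u₀ - u₁) / 3;
           (u₀ - u₁) / 3, 0, (u₀ - u₁) / 3;
           (u₀ - u₁) / 3, (u₀ - u₁) / 3, 0])ᵀ
        = !![(0 : ℂ), (u₀ - u₁) / 3, (u₀ - u₁) / 3;
           (u₀ - u₁) / 3, 0, (u₀ - u₁) / 3;
           (u₀ - u₁) / 3, (u₀ - u₁) / 3, 0] := by
      ext i j
      fin_cases i <;> fin_cases j <;> rfl
    rw [hinv, hBT, Matrix.mul_smul, Matrix.smul_mul, Matrix.mul_fin_three,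
      Matrix.mul_fin_three]
    clear hDE hinv hBT
    ext i j
    fin_cases i <;> fin_cases j <;>
      simp [Matrix.vecHead, Matrix.vecTail, Matrix.one_apply]
    all_goals field_simp
    all_goals first
      | (rw [div_eq_iff (by simp [h1, h2])]; rw [hs, ht]; ring)
      | (rw [hs, ht]; ring)
      | ring
end

section
/- Let F be a finite type, ∂F ⊆ F, and let Q be a real symmetric matrix indexed by F satisfying Q(i,j) ≤ 0 for all i ≠ j and Σⱼ Q(i,j) ≥ 0 for all i (i.e. Q is the matrix of a dissipative electrical network). Assume the block D = Q|_{(F∖∂F)×(F∖∂F)} is invertible. Then the Schur complement Q_{∂F} = A − B D⁻¹ Bᵀ satisfies the same properties: (Q_{∂F})(x,y) ≤ 0 for all x ≠ y in ∂F and Σ_y (Q_{∂F})(x,y) ≥ 0 for all x ∈ ∂F. (The trace map sends the cone 𝒟_F of Dirichlet forms on F to the cone 𝒟_{∂F} of Dirichlet forms on ∂F; moreover if all row sums of Q vanish then all row sums of Q_{∂F} vanish, i.e. conservative networks are mapped to conservative networks.) -/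
/-!
The interior block `D` of a dissipative matrix `Q` is again dissipative, and a minimum principle
shows that an invertible dissipative matrix has an entrywise nonnegative inverse. As `B ≤ 0`
entrywise, `B D⁻¹ Bᵀ ≥ 0` entrywise, which gives the signs off the diagonal. Applied to the
all-ones vector, the Schur complement has row sums `r_∂ - (B D⁻¹) r_int`, where `r` are the row
sums of `Q`; this is at least `r_∂ ≥ 0`, and it vanishes when `r` does.
-/

open Matrix Finset

namespace Matrix

variable {m n : Type*} [Fintype m] [Fintype n]

/-- The matrices `Q_ρ` of dissipative electrical networks. -/
def IsDissipative (Q : Matrix n n ℝ) : Prop :=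
  Q.IsSymm ∧ (∀ i j, i ≠ j → Q i j ≤ 0) ∧ ∀ i, 0 ≤ ∑ j, Q i j

namespace IsDissipative

variable {Q : Matrix n n ℝ}

theorem submatrix (hQ : Q.IsDissipative) (e : m ↪ n) : (Q.submatrix e e).IsDissipative := by
  classical
  obtain ⟨hsym, hoff, hrow⟩ := hQ
  refine ⟨hsym.submatrix e, fun i j hij => hoff _ _ (e.injective.ne hij), fun i => ?_⟩
  have hrest : ∑ j ∈ univ \ univ.map e, Q (e i) j ≤ 0 :=
    sum_nonpos fun j hj => hoff _ _ fun h => by simp [← h] at hj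
  calc 0 ≤ ∑ j, Q (e i) j := hrow (e i)
    _ = ∑ j ∈ univ \ univ.map e, Q (e i) j + ∑ j ∈ univ.map e, Q (e i) j :=
      (sum_sdiff (subset_univ _)).symm
    _ ≤ ∑ j ∈ univ.map e, Q (e i) j := by linarith
    _ = ∑ k, Q.submatrix e e i k := sum_map _ _ _

/-- Minimum principle: if `v` had a negative minimum, then on the set where it is attained the
rows of `Q` would vanish outside that set and sum to zero, so by symmetry `Q` would kill the
indicator of that set. -/
theorem nonneg_of_nonneg_mulVec [DecidableEq n] (hQ : Q.IsDissipative) (hdet : IsUnit Q.det)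
    {v : n → ℝ} (hv : 0 ≤ Q *ᵥ v) : 0 ≤ v := by
  obtain ⟨hsym, hoff, hrow⟩ := hQ
  by_contra hneg
  obtain ⟨i₀, hi₀⟩ : ∃ i, v i < 0 := by simpa [Pi.le_def] using hneg
  obtain ⟨i₁, -, hi₁⟩ := exists_mem_eq_inf' ⟨i₀, mem_univ i₀⟩ v
  set μ := univ.inf' ⟨i₀, mem_univ i₀⟩ v
  have hμ_le : ∀ j, μ ≤ v j := fun j => inf'_le v (mem_univ j)
  have hμ : μ < 0 := (hμ_le i₀).trans_lt hi₀
  have hmin : ∀ i, v i = μ → (∑ j, Q i j = 0) ∧ ∀ j, v j ≠ μ → Q i j = 0 := by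
    intro i hi
    have hterm : ∀ j ∈ univ, Q i j * (v j - μ) ≤ 0 := by
      intro j _
      rcases eq_or_ne i j with rfl | hij
      · simp [hi]
      · exact mul_nonpos_of_nonpos_of_nonneg (hoff i j hij) (sub_nonneg.2 (hμ_le j))
    have hsplit : (Q *ᵥ v) i = μ * ∑ j, Q i j + ∑ j, Q i j * (v j - μ) := by
      rw [mulVec, dotProduct, mul_sum, ← sum_add_distrib]
      exact sum_congr rfl fun j _ => by ring
    have hvi : 0 ≤ (Q *ᵥ v) i := hv i
    have hμsum : μ * ∑ j, Q i j ≤ 0 := mul_nonpos_of_nonpos_of_nonneg hμ.le (hrow i)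
    have hsum : ∑ j, Q i j * (v j - μ) = 0 := le_antisymm (sum_nonpos hterm) (by linarith)
    refine ⟨?_, fun j hj => ?_⟩
    · have hμsum0 : μ * ∑ j, Q i j = 0 := by linarith
      exact (mul_eq_zero.1 hμsum0).resolve_left hμ.ne
    · have htermj := (sum_eq_zero_iff_of_nonpos hterm).1 hsum j (mem_univ j)
      exact (mul_eq_zero.1 htermj).resolve_right (sub_ne_zero.2 hj)
  set w : n → ℝ := fun j => if v j = μ then 1 else 0
  have hw : Q *ᵥ w = 0 := by
    ext i
    simp only [w, mulVec, dotProduct, mul_ite, mul_one, mul_zero, Pi.zero_apply]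
    by_cases hi : v i = μ
    · refine (sum_congr rfl fun j _ => ?_).trans (hmin i hi).1
      split_ifs with hj
      · rfl
      · exact ((hmin i hi).2 j hj).symm
    · refine sum_eq_zero fun j _ => ?_
      split_ifs with hj
      · rw [← hsym.apply i j]
        exact (hmin j hj).2 i hi
      · rfl
  have hw0 : w ≠ 0 := fun h => by simpa [w, hi₁] using congr_fun h i₁
  exact hdet.ne_zero (exists_mulVec_eq_zero_iff.1 ⟨w, hw0, hw⟩)

theorem inv_apply_nonneg [DecidableEq n] (hQ : Q.IsDissipative) (hdet : IsUnit Q.det) (i j : n) :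
    0 ≤ Q⁻¹ i j := by
  have hcol : 0 ≤ Q⁻¹ *ᵥ Pi.single j 1 := hQ.nonneg_of_nonneg_mulVec hdet <| by
    rw [mulVec_mulVec, mul_nonsing_inv Q hdet, one_mulVec]
    exact Pi.single_nonneg.2 zero_le_one
  simpa [mulVec_single_one] using hcol i

end IsDissipative

theorem sub_mul_inv_mul_transpose_mulVec_one {R : Type*} [CommRing R] [DecidableEq n]
    (A : Matrix m m R) (B : Matrix m n R) {D : Matrix n n R} (hD : IsUnit D.det) :
    (A - B * D⁻¹ * Bᵀ) *ᵥ 1 = A *ᵥ 1 + B *ᵥ 1 - (B * D⁻¹) *ᵥ (Bᵀ *ᵥ 1 + D *ᵥ 1) := by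
  rw [sub_mulVec, mulVec_add, mulVec_mulVec, mulVec_mulVec, Matrix.mul_assoc B D⁻¹ D,
    nonsing_inv_mul D hD, Matrix.mul_one]
  abel

end Matrix

/-- If `Q` is a real symmetric matrix with nonpositive off-diagonal entries and nonnegative row
sums (the matrix of a dissipative electrical network), and its interior block `D` is invertible,
then the Schur complement `Q_{∂F} = A − B D⁻¹ Bᵀ` has nonpositive off-diagonal entries and
nonnegative row sums; moreover if all row sums of `Q` vanish then all row sums of `Q_{∂F}`
vanish. -/
theorem statement_17 {F : Type*} [Fintype F] [DecidableEq F]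
    (s : Set F) [DecidablePred (· ∈ s)]
    (Q : Matrix F F ℝ) (hQsym : Q.IsSymm)
    (hoff : ∀ i j : F, i ≠ j → Q i j ≤ 0)
    (hrow : ∀ i : F, 0 ≤ ∑ j, Q i j)
    (A : Matrix {x // x ∈ s} {x // x ∈ s} ℝ)
    (hA : A = Q.submatrix Subtype.val Subtype.val)
    (B : Matrix {x // x ∈ s} {x // x ∉ s} ℝ)
    (hB : B = Q.submatrix Subtype.val Subtype.val)
    (D : Matrix {x // x ∉ s} {x // x ∉ s} ℝ)
    (hD : D = Q.submatrix Subtype.val Subtype.val)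
    (hDinv : IsUnit D.det) :
    (∀ x y : {x // x ∈ s}, x ≠ y → (A - B * D⁻¹ * Bᵀ) x y ≤ 0) ∧
      (∀ x : {x // x ∈ s}, 0 ≤ ∑ y, (A - B * D⁻¹ * Bᵀ) x y) ∧
      ((∀ i : F, ∑ j, Q i j = 0) →
        ∀ x : {x // x ∈ s}, ∑ y, (A - B * D⁻¹ * Bᵀ) x y = 0) := by
  have hQ : Q.IsDissipative := ⟨hQsym, hoff, hrow⟩
  have hBnonpos : ∀ x k, B x k ≤ 0 := fun x k => hB ▸ hoff _ _ fun h => k.2 (h ▸ x.2)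
  have hBD : ∀ x l, (B * D⁻¹) x l ≤ 0 := fun x l =>
    sum_nonpos fun k _ => mul_nonpos_of_nonpos_of_nonneg (hBnonpos x k)
      ((hD ▸ hQ.submatrix (Function.Embedding.subtype _)).inv_apply_nonneg hDinv k l)
  have hsplit (i : F) : ∑ y : {x // x ∈ s}, Q i y + ∑ k : {x // x ∉ s}, Q i k = ∑ j, Q i j :=
    Fintype.sum_subtype_add_sum_subtype (· ∈ s) (Q i)
  have hrowsum (x) :
      ∑ y, (A - B * D⁻¹ * Bᵀ) x y = ∑ j, Q x j - ∑ l, (B * D⁻¹) x l * ∑ j, Q l j := by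
    have hschur := congr_fun (sub_mul_inv_mul_transpose_mulVec_one A B hDinv) x
    simp only [Pi.add_apply, Pi.sub_apply, mulVec, dotProduct, Pi.one_apply, mul_one,
      transpose_apply] at hschur
    rw [hschur, ← hsplit]
    congr 1
    · rw [hA, hB]
      rfl
    · refine sum_congr rfl fun l _ => ?_
      rw [← hsplit, hB, hD]
      simp [hQsym.apply]
  refine ⟨fun x y hxy => ?_, fun x => ?_, fun hcons x => ?_⟩
  · have hAxy : A x y ≤ 0 := hA ▸ hoff _ _ fun h => hxy (Subtype.ext h)
    have hcorr : 0 ≤ ∑ l, (B * D⁻¹) x l * B y l :=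
      sum_nonneg fun l _ => mul_nonneg_of_nonpos_of_nonpos (hBD x l) (hBnonpos y l)
    rw [Matrix.sub_apply, Matrix.mul_apply]
    simp only [transpose_apply]
    linarith
  · rw [hrowsum]
    have hcorr : ∑ l, (B * D⁻¹) x l * ∑ j, Q l j ≤ 0 :=
      sum_nonpos fun l _ => mul_nonpos_of_nonpos_of_nonneg (hBD x l) (hrow l)
    linarith [hrow x]
  · rw [hrowsum, hcons]
    simp [hcons]
end
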